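/- The st-core operation distributes over ⊕: for all flow graphs A and B, the st-core of A ⊕ B is isomorphic to (st-core of A) ⊕ (st-core of B). -/

import Mathlib

/-- A flow graph: a finite directed multigraph (loops and parallel edges allowed)
with a distinguished source vertex `s` and target vertex `t`.
(Connectedness is stated as a separate predicate `FlowGraph.Connected`.) -/
structure FlowGraph where
  V : Type
  E : Type
  [finV : Finite V]
  [finE : Finite E]
  src : E → V
  tgt : E → V
  s : V
  t : V

attribute [instance] FlowGraph.finV FlowGraph.finE

namespace FlowGraph

/-- Adjacency in the underlying undirected multigraph, using only edges in `ES`. -/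
def adjOn (A : FlowGraph) (ES : Set A.E) (u v : A.V) : Prop :=
  ∃ e ∈ ES, (A.src e = u ∧ A.tgt e = v) ∨ (A.src e = v ∧ A.tgt e = u)

/-- Reachability in the underlying undirected multigraph, using only edges in `ES`. -/
def reachOn (A : FlowGraph) (ES : Set A.E) : A.V → A.V → Prop :=
  Relation.ReflTransGen (A.adjOn ES)

/-- The multigraph underlying a flow graph is connected. -/
def Connected (A : FlowGraph) : Prop := ∀ u v : A.V, A.reachOn Set.univ u v

/-- Isomorphism of flow graphs: a graph isomorphism mapping source to source
and target to target.  Equality "as flow graphs" means `Iso`. -/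
def Iso (A B : FlowGraph) : Prop :=
  ∃ (φV : A.V ≃ B.V) (φE : A.E ≃ B.E),
    (∀ e, B.src (φE e) = φV (A.src e)) ∧
    (∀ e, B.tgt (φE e) = φV (A.tgt e)) ∧
    φV A.s = B.s ∧ φV A.t = B.t

/-- The relation identifying `t_A` with `s_B` in the disjoint union of vertex sets. -/
def addRel (A B : FlowGraph) : (A.V ⊕ B.V) → (A.V ⊕ B.V) → Prop :=
  fun x y => x = Sum.inl A.t ∧ y = Sum.inr B.s

/-- The sum `A ⊕ B` of flow graphs: disjoint copies of `A` and `B`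
with `t_A` identified with `s_B`; source `s_A`, target `t_B`. -/
def add (A B : FlowGraph) : FlowGraph where
  V := Quot (addRel A B)
  E := A.E ⊕ B.E
  src := fun e =>
    Quot.mk _ (Sum.elim (fun a => Sum.inl (A.src a)) (fun b => Sum.inr (B.src b)) e)
  tgt := fun e =>
    Quot.mk _ (Sum.elim (fun a => Sum.inl (A.tgt a)) (fun b => Sum.inr (B.tgt b)) e)
  s := Quot.mk _ (Sum.inl A.s)
  t := Quot.mk _ (Sum.inr B.t)

/-- The relation gluing, for every edge `e = (u,v)` of `A`, the source of the
`e`-th copy of `B` to `u` and its target to `v`. -/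
def mulRel (A B : FlowGraph) : (A.V ⊕ A.E × B.V) → (A.V ⊕ A.E × B.V) → Prop :=
  fun x y => ∃ e : A.E,
    (x = Sum.inr (e, B.s) ∧ y = Sum.inl (A.src e)) ∨
    (x = Sum.inr (e, B.t) ∧ y = Sum.inl (A.tgt e))

/-- The product `A ⊗ B` of flow graphs: every directed edge `e = (u,v)` of `A` is
replaced by a fresh copy of `B`, with `u` identified with the source of the copy
and `v` with its target; source `s_A`, target `t_A`. -/
def mul (A B : FlowGraph) : FlowGraph where
  V := Quot (mulRel A B)
  E := A.E × B.E
  src := fun p => Quot.mk _ (Sum.inr (p.1, B.src p.2))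
  tgt := fun p => Quot.mk _ (Sum.inr (p.1, B.tgt p.2))
  s := Quot.mk _ (Sum.inl A.s)
  t := Quot.mk _ (Sum.inl A.t)

/-- The trivial flow graph `F₀`: one vertex, no edges, source = target. -/
def F0 : FlowGraph where
  V := Unit
  E := Empty
  src := Empty.elim
  tgt := Empty.elim
  s := ()
  t := ()

/-- The flow graph `F₁`: a single directed edge from source to target. -/
def F1 : FlowGraph where
  V := Bool
  E := Unit
  src := fun _ => false
  tgt := fun _ => true
  s := false
  t := true

/-- The graphical natural number `n`: the directed path with `n+1` vertices and
`n` edges, source its initial vertex and target its final vertex. -/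
def pathGraph (n : ℕ) : FlowGraph where
  V := Fin (n + 1)
  E := Fin n
  src := fun e => e.castSucc
  tgt := fun e => e.succ
  s := 0
  t := Fin.last n

/-- A flow graph is infinitesimal if it is nontrivial and its source equals its target. -/
def Infinitesimal (A : FlowGraph) : Prop := ¬ A.Iso F0 ∧ A.s = A.t

/-- `w` is a splitting vertex of `A`: `w ≠ s_A, t_A`, and after deleting `w`
(i.e. using only edges not incident to `w`), `s_A` and `t_A` lie in distinct
components (hence deletion produces at least two components). -/
def IsSplittingVertex (A : FlowGraph) (w : A.V) : Prop :=
  w ≠ A.s ∧ w ≠ A.t ∧ ¬ A.reachOn {e | A.src e ≠ w ∧ A.tgt e ≠ w} A.s A.t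

/-- `e₀` is a splitting edge of `A`: deleting `e₀` leaves exactly two components,
one containing `s_A` and the other containing `t_A`. -/
def IsSplittingEdge (A : FlowGraph) (e₀ : A.E) : Prop :=
  ¬ A.reachOn {e | e ≠ e₀} A.s A.t ∧
  ∀ v : A.V, A.reachOn {e | e ≠ e₀} v A.s ∨ A.reachOn {e | e ≠ e₀} v A.t

/-- The initial vertex of a directed edge traversed with direction `dir`
(`true` = forwards, `false` = backwards). -/
def stepSrc (A : FlowGraph) (p : A.E × Bool) : A.V := if p.2 then A.src p.1 else A.tgt p.1

/-- The final vertex of a directed edge traversed with direction `dir`. -/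
def stepTgt (A : FlowGraph) (p : A.E × Bool) : A.V := if p.2 then A.tgt p.1 else A.src p.1

/-- `l` is a walk from `u` to `v` in the underlying undirected multigraph:
a list of edges each traversed in some direction, consecutively matching. -/
def IsWalk (A : FlowGraph) : A.V → A.V → List (A.E × Bool) → Prop
  | u, v, [] => u = v
  | u, v, p :: l => A.stepSrc p = u ∧ A.IsWalk (A.stepTgt p) v l

/-- The list of vertices visited by a walk starting at `u`. -/
def walkVertices (A : FlowGraph) (u : A.V) : List (A.E × Bool) → List A.V
  | [] => [u]
  | p :: l => u :: A.walkVertices (A.stepTgt p) l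

/-- The edge `e` has the ST property: some non-self-intersecting path from `s_A`
to `t_A` in the underlying undirected multigraph traverses `e`. -/
def HasST (A : FlowGraph) (e : A.E) : Prop :=
  ∃ l : List (A.E × Bool), A.IsWalk A.s A.t l ∧ (A.walkVertices A.s l).Nodup ∧
    ∃ dir : Bool, (e, dir) ∈ l

/-- `A` is an st-flow graph: every edge has the ST property. -/
def IsSTGraph (A : FlowGraph) : Prop := ∀ e : A.E, A.HasST e

/-- The vertex set of the st-core: `s_A`, `t_A`, and all endpoints of ST edges. -/
def stCoreV (A : FlowGraph) : Set A.V :=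
  {v | v = A.s ∨ v = A.t ∨ ∃ e, A.HasST e ∧ (A.src e = v ∨ A.tgt e = v)}

/-- The st-core of `A`: delete all edges without the ST property and keep the
subgraph induced by the remaining edges together with `s_A` and `t_A`. -/
def stCore (A : FlowGraph) : FlowGraph where
  V := {v // v ∈ A.stCoreV}
  E := {e // A.HasST e}
  src := fun e => ⟨A.src e.1, Or.inr (Or.inr ⟨e.1, e.2, Or.inl rfl⟩)⟩
  tgt := fun e => ⟨A.tgt e.1, Or.inr (Or.inr ⟨e.1, e.2, Or.inr rfl⟩)⟩
  s := ⟨A.s, Or.inl rfl⟩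
  t := ⟨A.t, Or.inr (Or.inl rfl)⟩

/-- An embedding of (the multigraph of) `A` into (the multigraph of) `B`:
injective on vertices and on edges, preserving directed incidence. -/
structure Emb (A B : FlowGraph) where
  vmap : A.V → B.V
  emap : A.E → B.E
  vinj : Function.Injective vmap
  einj : Function.Injective emap
  src_map : ∀ e, B.src (emap e) = vmap (A.src e)
  tgt_map : ∀ e, B.tgt (emap e) = vmap (A.tgt e)

/-- `(V₁, E₁)` is a subgraph: all endpoints of edges in `E₁` lie in `V₁`. -/
def IsSubgraph (A : FlowGraph) (VS : Set A.V) (ES : Set A.E) : Prop :=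
  ∀ e ∈ ES, A.src e ∈ VS ∧ A.tgt e ∈ VS

/-- The subgraph `(VS, ES)` is connected. -/
def SubConnected (A : FlowGraph) (VS : Set A.V) (ES : Set A.E) : Prop :=
  ∀ u ∈ VS, ∀ v ∈ VS, A.reachOn ES u v

/-- An `(s,t)`-splitting of `A`: two connected subgraphs, the first containing
`s_A`, the second containing `t_A`, whose edge sets partition the edges of `A`. -/
def IsSplitting (A : FlowGraph) (V₁ V₂ : Set A.V) (E₁ E₂ : Set A.E) : Prop :=
  A.IsSubgraph V₁ E₁ ∧ A.IsSubgraph V₂ E₂ ∧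
  A.SubConnected V₁ E₁ ∧ A.SubConnected V₂ E₂ ∧
  A.s ∈ V₁ ∧ A.t ∈ V₂ ∧
  E₁ ∪ E₂ = Set.univ ∧ E₁ ∩ E₂ = ∅

/-- The weak order `A ⩽ B`: there is an `(s,t)`-splitting `(H₁, H₂)` of `A` and
graph embeddings `φᵢ : Hᵢ → B` with `φ₁ s_A = s_B`, `φ₂ t_A = t_B`, and whose
edge images are disjoint. -/
def weakLE (A B : FlowGraph) : Prop :=
  ∃ (V₁ V₂ : Set A.V) (E₁ E₂ : Set A.E)
    (φ₁V φ₂V : A.V → B.V) (φ₁E φ₂E : A.E → B.E),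
    A.IsSplitting V₁ V₂ E₁ E₂ ∧
    Set.InjOn φ₁V V₁ ∧ Set.InjOn φ₂V V₂ ∧
    Set.InjOn φ₁E E₁ ∧ Set.InjOn φ₂E E₂ ∧
    (∀ e ∈ E₁, B.src (φ₁E e) = φ₁V (A.src e) ∧ B.tgt (φ₁E e) = φ₁V (A.tgt e)) ∧
    (∀ e ∈ E₂, B.src (φ₂E e) = φ₂V (A.src e) ∧ B.tgt (φ₂E e) = φ₂V (A.tgt e)) ∧
    φ₁V A.s = B.s ∧ φ₂V A.t = B.t ∧
    (φ₁E '' E₁) ∩ (φ₂E '' E₂) = ∅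

/-- `k`-fold sum `C ⊕ C ⊕ ⋯ ⊕ C` (`k` summands); `smul 0 C = F₀`. -/
def smul : ℕ → FlowGraph → FlowGraph
  | 0, _ => F0
  | n + 1, C => C.add (smul n C)

/-- Sum of a head flow graph with a list of further summands:
`sumList A₀ [A₁, …, Aₖ] = A₀ ⊕ A₁ ⊕ ⋯ ⊕ Aₖ`. -/
def sumList (A : FlowGraph) (L : List FlowGraph) : FlowGraph := L.foldl add A

/-- `A` is ⊕-irreducible: it is not (isomorphic to) a sum of two nontrivial flow graphs. -/
def IsIrreducible (A : FlowGraph) : Prop :=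
  ¬ ∃ B C : FlowGraph, B.Connected ∧ C.Connected ∧
      ¬ B.Iso F0 ∧ ¬ C.Iso F0 ∧ A.Iso (B.add C)

end FlowGraph

/-!
A simple `s`–`t` path of `A ⊕ B` has to cross the glued vertex `t_A = s_B`, and being simple it
crosses it only once: it is a simple `s`–`t` path of `A` followed by one of `B`, and every such
pair concatenates to a simple path of `A ⊕ B`. Since both summands are connected, each has some
simple `s`–`t` path, so an edge of `A ⊕ B` has the ST property exactly when it has it in its own
summand. Hence the natural embedding of `stCore A ⊕ stCore B` into `A ⊕ B` maps onto the st-core.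
-/

namespace FlowGraph

variable {A B C D : FlowGraph}

theorem Iso.symm (h : C.Iso D) : D.Iso C := by
  obtain ⟨φV, φE, hsrc, htgt, hs, ht⟩ := h
  refine ⟨φV.symm, φE.symm, fun e => ?_, fun e => ?_, ?_, ?_⟩
  · rw [φV.eq_symm_apply, ← hsrc, φE.apply_symm_apply]
  · rw [φV.eq_symm_apply, ← htgt, φE.apply_symm_apply]
  · rw [φV.symm_apply_eq, hs]
  · rw [φV.symm_apply_eq, ht]

section Walks

variable {u v w : A.V} {l l₁ l₂ : List (A.E × Bool)}

theorem IsWalk.append (h₁ : A.IsWalk u w l₁) (h₂ : A.IsWalk w v l₂) :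
    A.IsWalk u v (l₁ ++ l₂) := by
  induction l₁ generalizing u with
  | nil => obtain rfl : u = w := h₁; exact h₂
  | cons p l ih => exact ⟨h₁.1, ih h₁.2⟩

theorem walkVertices_ne_nil (u : A.V) (l : List (A.E × Bool)) : A.walkVertices u l ≠ [] := by
  cases l <;> simp [walkVertices]

theorem start_mem_walkVertices (u : A.V) (l : List (A.E × Bool)) : u ∈ A.walkVertices u l := by
  cases l <;> simp [walkVertices]

theorem walkVertices_append (h : A.IsWalk u w l₁) (l₂ : List (A.E × Bool)) :
    A.walkVertices u (l₁ ++ l₂) = (A.walkVertices u l₁).dropLast ++ A.walkVertices w l₂ := by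
  induction l₁ generalizing u with
  | nil => obtain rfl : u = w := h; rfl
  | cons p l ih =>
    rw [List.cons_append, walkVertices, walkVertices, ih h.2,
      List.dropLast_cons_of_ne_nil (walkVertices_ne_nil _ _), List.cons_append]

theorem IsWalk.walkVertices_eq (h : A.IsWalk u v l) :
    A.walkVertices u l = (A.walkVertices u l).dropLast ++ [v] := by
  simpa [walkVertices] using walkVertices_append h []

theorem eq_or_exists_stepTgt_eq_of_mem_walkVertices (hv : v ∈ A.walkVertices u l) :
    v = u ∨ ∃ p ∈ l, A.stepTgt p = v := by
  induction l generalizing u with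
  | nil => simpa [walkVertices] using hv
  | cons p l ih =>
    rcases List.mem_cons.1 hv with rfl | hv
    · exact Or.inl rfl
    · rcases ih hv with rfl | ⟨q, hq, rfl⟩
      · exact Or.inr ⟨p, List.mem_cons_self, rfl⟩
      · exact Or.inr ⟨q, List.mem_cons_of_mem _ hq, rfl⟩

theorem IsWalk.exists_suffix (h : A.IsWalk u v l) (hw : w ∈ A.walkVertices u l) :
    ∃ l', A.IsWalk w v l' ∧ A.walkVertices w l' <:+ A.walkVertices u l := by
  induction l generalizing u with
  | nil =>
    obtain rfl : u = v := h
    obtain rfl : w = u := by simpa [walkVertices] using hw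
    exact ⟨[], rfl, List.suffix_refl _⟩
  | cons p l ih =>
    rcases List.mem_cons.1 hw with rfl | hw
    · exact ⟨p :: l, h, List.suffix_refl _⟩
    · obtain ⟨l', hl', hsuf⟩ := ih h.2 hw
      exact ⟨l', hl', hsuf.trans (List.suffix_cons _ _)⟩

theorem IsWalk.exists_nodup (h : A.IsWalk u v l) :
    ∃ l', A.IsWalk u v l' ∧ (A.walkVertices u l').Nodup := by
  induction l generalizing u with
  | nil => exact ⟨[], h, List.nodup_singleton u⟩
  | cons p l ih =>
    obtain ⟨l', hl', hnd⟩ := ih h.2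
    by_cases hu : u ∈ A.walkVertices (A.stepTgt p) l'
    · obtain ⟨l'', hl'', hsuf⟩ := hl'.exists_suffix hu
      exact ⟨l'', hl'', hnd.sublist hsuf.sublist⟩
    · exact ⟨p :: l', ⟨h.1, hl'⟩, List.nodup_cons.2 ⟨hu, hnd⟩⟩

theorem exists_isWalk_of_reachOn {ES : Set A.E} (h : A.reachOn ES u v) : ∃ l, A.IsWalk u v l := by
  induction h with
  | refl => exact ⟨[], rfl⟩
  | tail _ hadj ih =>
    obtain ⟨l, hl⟩ := ih
    obtain ⟨e, -, ⟨hs, ht⟩ | ⟨hs, ht⟩⟩ := hadj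
    · exact ⟨l ++ [(e, true)], hl.append ⟨hs, ht⟩⟩
    · exact ⟨l ++ [(e, false)], hl.append ⟨ht, hs⟩⟩

end Walks

def IsSTPath (A : FlowGraph) (l : List (A.E × Bool)) : Prop :=
  A.IsWalk A.s A.t l ∧ (A.walkVertices A.s l).Nodup

theorem Connected.exists_isSTPath (hA : A.Connected) : ∃ l, A.IsSTPath l := by
  obtain ⟨l, hl⟩ := exists_isWalk_of_reachOn (hA A.s A.t)
  exact hl.exists_nodup

theorem hasST_iff {e : A.E} : A.HasST e ↔ ∃ l, A.IsSTPath l ∧ ∃ d, (e, d) ∈ l := by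
  simp only [HasST, IsSTPath, and_assoc]

theorem mem_stCoreV_of_mem_walkVertices {l : List (A.E × Bool)} {v : A.V} (hl : A.IsSTPath l)
    (hv : v ∈ A.walkVertices A.s l) : v ∈ A.stCoreV := by
  rcases eq_or_exists_stepTgt_eq_of_mem_walkVertices hv with rfl | ⟨⟨e, d⟩, hp, rfl⟩
  · exact Or.inl rfl
  · refine Or.inr (Or.inr ⟨e, hasST_iff.2 ⟨l, hl, d, hp⟩, ?_⟩)
    cases d <;> simp [stepTgt]

namespace Emb

variable (φ : Emb C D)

def mapWalk (l : List (C.E × Bool)) : List (D.E × Bool) := l.map (Prod.map φ.emap id)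

theorem stepSrc_map (p : C.E × Bool) : D.stepSrc (Prod.map φ.emap id p) = φ.vmap (C.stepSrc p) := by
  obtain ⟨e, _ | _⟩ := p <;> simp [stepSrc, φ.src_map, φ.tgt_map]

theorem stepTgt_map (p : C.E × Bool) : D.stepTgt (Prod.map φ.emap id p) = φ.vmap (C.stepTgt p) := by
  obtain ⟨e, _ | _⟩ := p <;> simp [stepTgt, φ.src_map, φ.tgt_map]

theorem isWalk_mapWalk {u v : C.V} {l : List (C.E × Bool)} (h : C.IsWalk u v l) :
    D.IsWalk (φ.vmap u) (φ.vmap v) (φ.mapWalk l) := by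
  induction l generalizing u with
  | nil => obtain rfl : u = v := h; rfl
  | cons p l ih => exact ⟨by rw [stepSrc_map, h.1], by rw [stepTgt_map]; exact ih h.2⟩

theorem mem_mapWalk_iff {e : C.E} {d : Bool} {l : List (C.E × Bool)} :
    (φ.emap e, d) ∈ φ.mapWalk l ↔ (e, d) ∈ l :=
  List.mem_map_of_injective (f := Prod.map φ.emap id) (a := (e, d))
    (φ.einj.prodMap Function.injective_id)

theorem walkVertices_mapWalk (u : C.V) (l : List (C.E × Bool)) :
    D.walkVertices (φ.vmap u) (φ.mapWalk l) = (C.walkVertices u l).map φ.vmap := by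
  induction l generalizing u with
  | nil => rfl
  | cons p l ih =>
    simp only [mapWalk, List.map_cons, walkVertices, stepTgt_map] at ih ⊢
    rw [ih]

theorem iso_stCore (hE : Set.range φ.emap = {e | D.HasST e}) (hV : Set.range φ.vmap = D.stCoreV)
    (hs : φ.vmap C.s = D.s) (ht : φ.vmap C.t = D.t) : C.Iso D.stCore :=
  ⟨(Equiv.ofInjective _ φ.vinj).trans (Equiv.setCongr hV),
    (Equiv.ofInjective _ φ.einj).trans (Equiv.setCongr hE),
    fun e => Subtype.ext (φ.src_map e), fun e => Subtype.ext (φ.tgt_map e),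
    Subtype.ext hs, Subtype.ext ht⟩

end Emb

def stCoreEmb (A : FlowGraph) : Emb A.stCore A where
  vmap := Subtype.val
  emap := Subtype.val
  vinj := Subtype.val_injective
  einj := Subtype.val_injective
  src_map _ := rfl
  tgt_map _ := rfl

def inlV (v : A.V) : (A.add B).V := Quot.mk _ (.inl v)

def inrV (v : B.V) : (A.add B).V := Quot.mk _ (.inr v)

theorem add_mk_eq_mk_iff {x y : A.V ⊕ B.V} :
    Quot.mk (addRel A B) x = Quot.mk _ y ↔ x = y ∨ addRel A B x y ∨ addRel A B y x := by
  refine ⟨fun h => ?_, ?_⟩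
  · -- `addRel` relates a single pair, so its reflexive-symmetric closure is already transitive
    have hg := Quot.eqvGen_exact h
    clear h
    induction hg with
    | rel _ _ hxy => exact Or.inr (Or.inl hxy)
    | refl => exact Or.inl rfl
    | symm | trans => aesop (add simp addRel)
  · rintro (rfl | h | h)
    · rfl
    · exact Quot.sound h
    · exact (Quot.sound h).symm

theorem inlV_injective : Function.Injective (inlV : A.V → (A.add B).V) := fun u v h => by
  simpa [addRel] using add_mk_eq_mk_iff.1 h

theorem inrV_injective : Function.Injective (inrV : B.V → (A.add B).V) := fun u v h => by
  simpa [addRel] using add_mk_eq_mk_iff.1 h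

theorem inlV_eq_inrV_iff {u : A.V} {v : B.V} :
    (inlV u : (A.add B).V) = inrV v ↔ u = A.t ∧ v = B.s := by
  refine add_mk_eq_mk_iff.trans ?_
  simp [addRel]

theorem inlV_t_eq_inrV_s : (inlV A.t : (A.add B).V) = inrV B.s :=
  inlV_eq_inrV_iff.2 ⟨rfl, rfl⟩

def addInl (A B : FlowGraph) : Emb A (A.add B) where
  vmap := inlV
  emap := Sum.inl
  vinj := inlV_injective
  einj := Sum.inl_injective
  src_map _ := rfl
  tgt_map _ := rfl

def addInr (A B : FlowGraph) : Emb B (A.add B) where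
  vmap := inrV
  emap := Sum.inr
  vinj := inrV_injective
  einj := Sum.inr_injective
  src_map _ := rfl
  tgt_map _ := rfl

theorem stepSrc_add_inl (e : A.E) (d : Bool) :
    (A.add B).stepSrc (.inl e, d) = inlV (A.stepSrc (e, d)) := (addInl A B).stepSrc_map (e, d)

theorem stepTgt_add_inl (e : A.E) (d : Bool) :
    (A.add B).stepTgt (.inl e, d) = inlV (A.stepTgt (e, d)) := (addInl A B).stepTgt_map (e, d)

theorem stepSrc_add_inr (e : B.E) (d : Bool) :
    (A.add B).stepSrc (.inr e, d) = inrV (B.stepSrc (e, d)) := (addInr A B).stepSrc_map (e, d)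

theorem stepTgt_add_inr (e : B.E) (d : Bool) :
    (A.add B).stepTgt (.inr e, d) = inrV (B.stepTgt (e, d)) := (addInr A B).stepTgt_map (e, d)

theorem exists_eq_mapWalk_addInr {w v : B.V} {l : List ((A.add B).E × Bool)}
    (hl : (A.add B).IsWalk (inrV w) (inrV v) l)
    (hglue : inlV A.t ∉ (A.add B).walkVertices (inrV w) l) :
    ∃ l₂, B.IsWalk w v l₂ ∧ l = (addInr A B).mapWalk l₂ := by
  induction l generalizing w with
  | nil => exact ⟨[], inrV_injective hl, rfl⟩
  | cons p l ih =>
    obtain ⟨hsrc, htgt⟩ := hl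
    obtain ⟨e | e, d⟩ := p
    · rw [stepSrc_add_inl] at hsrc
      obtain ⟨-, rfl⟩ := inlV_eq_inrV_iff.1 hsrc
      exact absurd (inlV_t_eq_inrV_s ▸ start_mem_walkVertices _ _) hglue
    · rw [stepSrc_add_inr] at hsrc
      rw [stepTgt_add_inr] at htgt
      have hglue' : inlV A.t ∉ (A.add B).walkVertices (inrV (B.stepTgt (e, d))) l := fun h =>
        hglue (List.mem_cons_of_mem _ (stepTgt_add_inr e d ▸ h))
      obtain ⟨l₂, hl₂, rfl⟩ := ih htgt hglue'
      exact ⟨(e, d) :: l₂, ⟨inrV_injective hsrc, hl₂⟩, rfl⟩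

theorem exists_eq_mapWalk_append {u : A.V} {v : B.V} {l : List ((A.add B).E × Bool)}
    (hl : (A.add B).IsWalk (inlV u) (inrV v) l)
    (hnd : ((A.add B).walkVertices (inlV u) l).Nodup) :
    ∃ l₁ l₂, A.IsWalk u A.t l₁ ∧ B.IsWalk B.s v l₂ ∧
      l = (addInl A B).mapWalk l₁ ++ (addInr A B).mapWalk l₂ := by
  induction l generalizing u with
  | nil =>
    obtain ⟨rfl, rfl⟩ := inlV_eq_inrV_iff.1 hl
    exact ⟨[], [], rfl, rfl, rfl⟩
  | cons p l ih =>
    obtain ⟨hsrc, htgt⟩ := hl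
    obtain ⟨hu, hnd⟩ := List.nodup_cons.1 hnd
    obtain ⟨e | e, d⟩ := p
    · rw [stepSrc_add_inl] at hsrc
      rw [stepTgt_add_inl] at htgt hnd
      obtain ⟨l₁, l₂, hl₁, hl₂, rfl⟩ := ih htgt hnd
      exact ⟨(e, d) :: l₁, l₂, ⟨inlV_injective hsrc, hl₁⟩, hl₂, rfl⟩
    · -- the first edge of `B` leaves the glued vertex, which the rest of the path avoids
      rw [stepSrc_add_inr] at hsrc
      obtain ⟨rfl, hs⟩ := inlV_eq_inrV_iff.1 hsrc.symm
      rw [stepTgt_add_inr] at htgt hu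
      obtain ⟨l₂, hl₂, rfl⟩ := exists_eq_mapWalk_addInr htgt hu
      exact ⟨[], (e, d) :: l₂, rfl, ⟨hs, hl₂⟩, rfl⟩

theorem nodup_walkVertices_mapWalk_append_iff {u : A.V} {l₁ : List (A.E × Bool)}
    (h₁ : A.IsWalk u A.t l₁) (l₂ : List (B.E × Bool)) :
    ((A.add B).walkVertices (inlV u)
        ((addInl A B).mapWalk l₁ ++ (addInr A B).mapWalk l₂)).Nodup ↔
      (A.walkVertices u l₁).Nodup ∧ (B.walkVertices B.s l₂).Nodup := by
  have hw : (A.add B).IsWalk (inlV u) (inlV A.t) _ := (addInl A B).isWalk_mapWalk h₁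
  rw [walkVertices_append hw, inlV_t_eq_inrV_s,
    show (A.add B).walkVertices (inlV u) _ = (A.walkVertices u l₁).map inlV from
      (addInl A B).walkVertices_mapWalk u l₁,
    show (A.add B).walkVertices (inrV B.s) _ = (B.walkVertices B.s l₂).map inrV from
      (addInr A B).walkVertices_mapWalk B.s l₂]
  obtain ⟨xs, hxs⟩ : ∃ xs, A.walkVertices u l₁ = xs ++ [A.t] := ⟨_, h₁.walkVertices_eq⟩
  have hs := start_mem_walkVertices B.s l₂
  rw [hxs, List.map_append, List.map_singleton, List.dropLast_concat, List.nodup_append,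
    List.nodup_append, List.nodup_map_iff inlV_injective, List.nodup_map_iff inrV_injective]
  simp only [List.mem_map, ne_eq, forall_exists_index, and_imp, forall_apply_eq_imp_iff₂,
    inlV_eq_inrV_iff, not_and, List.nodup_cons, List.not_mem_nil, not_false_eq_true,
    List.nodup_nil, and_self, List.mem_cons, or_false, forall_eq, true_and]
  exact ⟨fun ⟨hxs, hys, hdisj⟩ => ⟨⟨hxs, fun a ha hat => hdisj a ha _ hs hat rfl⟩, hys⟩,
    fun ⟨⟨hxs, ht⟩, hys⟩ => ⟨hxs, hys, fun a ha _ _ hat => absurd hat (ht a ha)⟩⟩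

theorem isSTPath_add_iff {l : List ((A.add B).E × Bool)} :
    (A.add B).IsSTPath l ↔ ∃ l₁ l₂, A.IsSTPath l₁ ∧ B.IsSTPath l₂ ∧
      l = (addInl A B).mapWalk l₁ ++ (addInr A B).mapWalk l₂ := by
  constructor
  · rintro ⟨hl, hnd⟩
    obtain ⟨l₁, l₂, hl₁, hl₂, rfl⟩ := exists_eq_mapWalk_append hl hnd
    obtain ⟨hnd₁, hnd₂⟩ := (nodup_walkVertices_mapWalk_append_iff hl₁ l₂).1 hnd
    exact ⟨l₁, l₂, ⟨hl₁, hnd₁⟩, ⟨hl₂, hnd₂⟩, rfl⟩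
  · rintro ⟨l₁, l₂, ⟨hl₁, hnd₁⟩, ⟨hl₂, hnd₂⟩, rfl⟩
    refine ⟨IsWalk.append ((addInl A B).isWalk_mapWalk hl₁) ?_,
      (nodup_walkVertices_mapWalk_append_iff hl₁ l₂).2 ⟨hnd₁, hnd₂⟩⟩
    have h₂ : (A.add B).IsWalk (inrV B.s) (inrV B.t) _ := (addInr A B).isWalk_mapWalk hl₂
    rwa [← inlV_t_eq_inrV_s] at h₂

theorem hasST_add_inl_iff (hB : B.Connected) {e : A.E} :
    (A.add B).HasST (.inl e) ↔ A.HasST e := by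
  refine hasST_iff.trans (Iff.trans ?_ hasST_iff.symm)
  constructor
  · rintro ⟨_, hl, d, he⟩
    obtain ⟨l₁, l₂, hl₁, -, rfl⟩ := isSTPath_add_iff.1 hl
    refine ⟨l₁, hl₁, d, ?_⟩
    rcases List.mem_append.1 he with he | he
    · exact (addInl A B).mem_mapWalk_iff.1 he
    · obtain ⟨_, -, h⟩ := List.mem_map.1 he
      cases h
  · rintro ⟨l₁, hl₁, d, he⟩
    obtain ⟨l₂, hl₂⟩ := hB.exists_isSTPath
    exact ⟨_, isSTPath_add_iff.2 ⟨l₁, l₂, hl₁, hl₂, rfl⟩, d,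
      List.mem_append_left _ ((addInl A B).mem_mapWalk_iff.2 he)⟩

theorem hasST_add_inr_iff (hA : A.Connected) {e : B.E} :
    (A.add B).HasST (.inr e) ↔ B.HasST e := by
  refine hasST_iff.trans (Iff.trans ?_ hasST_iff.symm)
  constructor
  · rintro ⟨_, hl, d, he⟩
    obtain ⟨l₁, l₂, -, hl₂, rfl⟩ := isSTPath_add_iff.1 hl
    refine ⟨l₂, hl₂, d, ?_⟩
    rcases List.mem_append.1 he with he | he
    · obtain ⟨_, -, h⟩ := List.mem_map.1 he
      cases h
    · exact (addInr A B).mem_mapWalk_iff.1 he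
  · rintro ⟨l₂, hl₂, d, he⟩
    obtain ⟨l₁, hl₁⟩ := hA.exists_isSTPath
    exact ⟨_, isSTPath_add_iff.2 ⟨l₁, l₂, hl₁, hl₂, rfl⟩, d,
      List.mem_append_right _ ((addInr A B).mem_mapWalk_iff.2 he)⟩

theorem inlV_t_mem_stCoreV_add (hA : A.Connected) (hB : B.Connected) :
    inlV A.t ∈ (A.add B).stCoreV := by
  obtain ⟨l₁, hl₁⟩ := hA.exists_isSTPath
  obtain ⟨l₂, hl₂⟩ := hB.exists_isSTPath
  refine mem_stCoreV_of_mem_walkVertices (isSTPath_add_iff.2 ⟨l₁, l₂, hl₁, hl₂, rfl⟩) ?_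
  have hw : (A.add B).IsWalk (inlV A.s) (inlV A.t) _ := (addInl A B).isWalk_mapWalk hl₁.1
  rw [show (A.add B).s = inlV A.s from rfl, walkVertices_append hw]
  exact List.mem_append_right _ (start_mem_walkVertices _ _)

theorem stCoreV_add (hA : A.Connected) (hB : B.Connected) :
    (A.add B).stCoreV = inlV '' A.stCoreV ∪ inrV '' B.stCoreV := by
  ext x
  constructor
  · rintro (rfl | rfl | ⟨e | e, he, hx⟩)
    · exact Or.inl ⟨A.s, Or.inl rfl, rfl⟩
    · exact Or.inr ⟨B.t, Or.inr (Or.inl rfl), rfl⟩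
    · have he := (hasST_add_inl_iff hB).1 he
      rcases hx with rfl | rfl
      · exact Or.inl ⟨A.src e, Or.inr (Or.inr ⟨e, he, Or.inl rfl⟩), rfl⟩
      · exact Or.inl ⟨A.tgt e, Or.inr (Or.inr ⟨e, he, Or.inr rfl⟩), rfl⟩
    · have he := (hasST_add_inr_iff hA).1 he
      rcases hx with rfl | rfl
      · exact Or.inr ⟨B.src e, Or.inr (Or.inr ⟨e, he, Or.inl rfl⟩), rfl⟩
      · exact Or.inr ⟨B.tgt e, Or.inr (Or.inr ⟨e, he, Or.inr rfl⟩), rfl⟩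
  · rintro (⟨v, rfl | rfl | ⟨e, he, rfl | rfl⟩, rfl⟩ | ⟨v, rfl | rfl | ⟨e, he, rfl | rfl⟩, rfl⟩)
    · exact Or.inl rfl
    · exact inlV_t_mem_stCoreV_add hA hB
    · exact Or.inr (Or.inr ⟨.inl e, (hasST_add_inl_iff hB).2 he, Or.inl rfl⟩)
    · exact Or.inr (Or.inr ⟨.inl e, (hasST_add_inl_iff hB).2 he, Or.inr rfl⟩)
    · exact inlV_t_eq_inrV_s (A := A) ▸ inlV_t_mem_stCoreV_add hA hB
    · exact Or.inr (Or.inl rfl)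
    · exact Or.inr (Or.inr ⟨.inr e, (hasST_add_inr_iff hA).2 he, Or.inl rfl⟩)
    · exact Or.inr (Or.inr ⟨.inr e, (hasST_add_inr_iff hA).2 he, Or.inr rfl⟩)

def Emb.add (φ : Emb A C) (ψ : Emb B D) (ht : φ.vmap A.t = C.t) (hs : ψ.vmap B.s = D.s) :
    Emb (A.add B) (C.add D) where
  vmap := Quot.lift (Sum.elim (inlV ∘ φ.vmap) (inrV ∘ ψ.vmap)) <| by
    rintro _ _ ⟨rfl, rfl⟩
    simpa [ht, hs] using inlV_t_eq_inrV_s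
  emap := Sum.map φ.emap ψ.emap
  vinj := by
    rintro ⟨u | u⟩ ⟨v | v⟩ h
    · exact congrArg inlV (φ.vinj (inlV_injective h))
    · obtain ⟨hu, hv⟩ := inlV_eq_inrV_iff.1 h
      rw [φ.vinj (hu.trans ht.symm), ψ.vinj (hv.trans hs.symm)]
      exact inlV_t_eq_inrV_s
    · obtain ⟨hv, hu⟩ := inlV_eq_inrV_iff.1 h.symm
      rw [φ.vinj (hv.trans ht.symm), ψ.vinj (hu.trans hs.symm)]
      exact inlV_t_eq_inrV_s.symm
    · exact congrArg inrV (ψ.vinj (inrV_injective h))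
  einj := φ.einj.sumMap ψ.einj
  src_map := by
    rintro (e | e)
    · exact congrArg inlV (φ.src_map e)
    · exact congrArg inrV (ψ.src_map e)
  tgt_map := by
    rintro (e | e)
    · exact congrArg inlV (φ.tgt_map e)
    · exact congrArg inrV (ψ.tgt_map e)

theorem Emb.range_add_vmap (φ : Emb A C) (ψ : Emb B D) (ht : φ.vmap A.t = C.t)
    (hs : ψ.vmap B.s = D.s) :
    Set.range (φ.add ψ ht hs).vmap = inlV '' Set.range φ.vmap ∪ inrV '' Set.range ψ.vmap := by
  refine (Set.range_quot_lift (r := addRel A B) _).trans ?_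
  rw [Set.Sum.elim_range, Set.range_comp, Set.range_comp]

theorem range_stCoreEmb_vmap : Set.range (stCoreEmb A).vmap = A.stCoreV := Subtype.range_coe

def stCoreAddEmb (A B : FlowGraph) : Emb (A.stCore.add B.stCore) (A.add B) :=
  (stCoreEmb A).add (stCoreEmb B) rfl rfl

theorem range_stCoreAddEmb_vmap (hA : A.Connected) (hB : B.Connected) :
    Set.range (stCoreAddEmb A B).vmap = (A.add B).stCoreV := by
  refine (Emb.range_add_vmap _ _ _ _).trans ?_
  rw [range_stCoreEmb_vmap, range_stCoreEmb_vmap, stCoreV_add hA hB]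

theorem range_stCoreAddEmb_emap (hA : A.Connected) (hB : B.Connected) :
    Set.range (stCoreAddEmb A B).emap = {e | (A.add B).HasST e} := by
  ext e
  constructor
  · rintro ⟨⟨e, he⟩ | ⟨e, he⟩, rfl⟩
    exacts [(hasST_add_inl_iff hB).2 he, (hasST_add_inr_iff hA).2 he]
  · rcases e with e | e <;> intro he
    exacts [⟨.inl ⟨e, (hasST_add_inl_iff hB).1 he⟩, rfl⟩,
      ⟨.inr ⟨e, (hasST_add_inr_iff hA).1 he⟩, rfl⟩]

end FlowGraph

open FlowGraph in
/-- The st-core operation distributes over `⊕`: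
st-core (A ⊕ B) ≅ (st-core A) ⊕ (st-core B). -/
theorem flowGraph_stCore_add (A B : FlowGraph)
    (hA : A.Connected) (hB : B.Connected) :
    ((A.add B).stCore).Iso ((A.stCore).add (B.stCore)) :=
  ((stCoreAddEmb A B).iso_stCore (range_stCoreAddEmb_emap hA hB)
    (range_stCoreAddEmb_vmap hA hB) rfl rfl).symm
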